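/- Classical (strong) form of the outer Euler–Lagrange equation: for any h > 0 and any consecutive thresholding iterates u^{n−1}, u^n : 𝕋³ → 𝕊¹, one has (Id − u^n ⊗ u^n)(G_h∗((u^n − u^{n−1})/h) − Δ_h u^n) = 0 a.e. in 𝕋³, where the approximate Laplacian is Δ_h u(x) := ∫_{ℝ³} G(z) (u(x+√h z) − 2u(x) + u(x−√h z))/(2h) dz with G := G_1. -/

import Mathlib

open MeasureTheory Real Filter
open scoped RealInnerProductSpace Topology NNReal

noncomputable section

abbrev Euc (d : ℕ) := EuclideanSpace ℝ (Fin d)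

/-- The Gaussian heat kernel on ℝ^d at time `h`. -/
def heatKer (d : ℕ) (h : ℝ) (z : Euc d) : ℝ :=
  (4 * π * h) ^ (-(d : ℝ) / 2) * Real.exp (-‖z‖ ^ 2 / (4 * h))

/-- Convolution of the heat kernel with a function. -/
def heatConv {d : ℕ} {F : Type*} [NormedAddCommGroup F] [NormedSpace ℝ F]
    (h : ℝ) (u : Euc d → F) (x : Euc d) : F :=
  ∫ z : Euc d, heatKer d h z • u (x - z)

/-- Convolution of `∂ᵢ G_h` with a function. -/
def heatConvD {d : ℕ} {F : Type*} [NormedAddCommGroup F] [NormedSpace ℝ F]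
    (h : ℝ) (i : Fin d) (u : Euc d → F) (x : Euc d) : F :=
  ∫ z : Euc d, (fderiv ℝ (heatKer d h) z (EuclideanSpace.single i 1)) • u (x - z)

/-- Fundamental domain of the torus ℝ^d/ℤ^d. -/
def cube (d : ℕ) : Set (Euc d) := {x | ∀ i, 0 ≤ x i ∧ x i < 1}

/-- An integer vector, regarded as an element of ℝ^d. -/
def intVec {d : ℕ} (k : Fin d → ℤ) : Euc d := WithLp.toLp 2 (fun i => (k i : ℝ))

/-- ℤ^d-periodicity. -/
def ZPeriodic {d : ℕ} {α : Type*} (u : Euc d → α) : Prop :=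
  ∀ (x : Euc d) (k : Fin d → ℤ), u (x + intVec k) = u x

/-- The localized thresholding energy. -/
def EhLoc (h : ℝ) (u : Euc 3 → Euc 2) (ψ : Euc 3 → ℝ) : ℝ :=
  (1 / h) * ∫ x in cube 3, ψ x * (1 - ⟪u x, heatConv h u x⟫)

/-- The thresholding energy. -/
def Eh (h : ℝ) (u : Euc 3 → Euc 2) : ℝ :=
  (1 / h) * ∫ x in cube 3, (1 - ⟪u x, heatConv h u x⟫)

/-- Squared Frobenius norm of a linear map between Euclidean spaces. -/
def frobSq {d m : ℕ} (L : Euc d →L[ℝ] Euc m) : ℝ :=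
  ∑ i : Fin d, ∑ j : Fin m, (L (EuclideanSpace.single i 1) j) ^ 2

/-- One step of the thresholding scheme: diffusion followed by projection onto 𝕊¹. -/
def threshStep (h : ℝ) (u : Euc 3 → Euc 2) : Euc 3 → Euc 2 :=
  fun x => ‖heatConv h u x‖⁻¹ • heatConv h u x

/-- `Du` is the weak Jacobian of `u` on the torus. -/
def IsWeakJacobian {d m : ℕ} (u : Euc d → Euc m) (Du : Euc d → Euc d →L[ℝ] Euc m) : Prop :=
  ∀ φ : Euc d → ℝ, ContDiff ℝ (⊤ : ℕ∞) φ → ZPeriodic φ →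
    ∀ (i : Fin d) (j : Fin m),
      ∫ x in cube d, u x j * fderiv ℝ φ x (EuclideanSpace.single i 1)
        = - ∫ x in cube d, Du x (EuclideanSpace.single i 1) j * φ x

/-- The approximate Laplacian: an average of second differences. -/
def approxLap (h : ℝ) (u : Euc 3 → Euc 2) (x : Euc 3) : Euc 2 :=
  ∫ z : Euc 3, heatKer 3 1 z •
    ((2 * h)⁻¹ • (u (x + Real.sqrt h • z) - (2 : ℝ) • u x + u (x - Real.sqrt h • z)))


/-! ### Auxiliary lemmas -/

lemma heatKer_nonneg' (d : ℕ) {h : ℝ} (hh : 0 < h) (z : Euc d) : 0 ≤ heatKer d h z := by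
  unfold heatKer; positivity

lemma continuous_heatKer' (d : ℕ) (h : ℝ) : Continuous (heatKer d h) := by
  unfold heatKer; fun_prop

lemma integrable_rexp_gauss' {h : ℝ} (hh : 0 < h) :
    Integrable (fun z : Euc 3 => Real.exp (-‖z‖ ^ 2 / (4 * h))) := by
  have hb : (0:ℝ) < (4 * h)⁻¹ := by positivity
  have := (GaussianFourier.integrable_cexp_neg_mul_sq_norm_add
    (V := Euc 3) (b := ((4 * h)⁻¹ : ℝ)) (by simpa using hb) 0 0).re
  apply this.congr
  filter_upwards with z
  have e1 : (-(((4 * h)⁻¹ : ℝ) : ℂ) * (‖z‖:ℂ) ^ 2 + 0 * ((inner ℝ (0 : Euc 3) z : ℝ) : ℂ))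
      = ((-‖z‖ ^ 2 / (4 * h) : ℝ) : ℂ) := by push_cast; ring
  rw [e1, ← Complex.ofReal_exp]
  exact RCLike.ofReal_re _

lemma integrable_heatKer' {h : ℝ} (hh : 0 < h) : Integrable (heatKer 3 h) :=
  (integrable_rexp_gauss' hh).const_mul _

lemma integral_heatKer' {h : ℝ} (hh : 0 < h) : ∫ z : Euc 3, heatKer 3 h z = 1 := by
  unfold heatKer
  rw [integral_const_mul]
  have hb : (0:ℝ) < (4 * h)⁻¹ := by positivity
  have e : ∫ z : Euc 3, Real.exp (-‖z‖ ^ 2 / (4 * h))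
      = ∫ z : Euc 3, Real.exp (-(4 * h)⁻¹ * ‖z‖ ^ 2) := by
    congr 1; funext z; congr 1; field_simp
  rw [e, GaussianFourier.integral_rexp_neg_mul_sq_norm hb, finrank_euclideanSpace_fin]
  have h4 : (0:ℝ) < 4 * π * h := by positivity
  rw [show π / (4 * h)⁻¹ = 4 * π * h by field_simp, ← Real.rpow_add h4]
  norm_num

lemma integrable_heatKer_smul' {h : ℝ} (hh : 0 < h) {g : Euc 3 → Euc 2}
    (hg : Measurable g) (hbd : ∀ z, ‖g z‖ ≤ 1) :
    Integrable (fun z : Euc 3 => heatKer 3 h z • g z) := by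
  apply Integrable.mono' (integrable_heatKer' hh)
  · exact ((continuous_heatKer' 3 h).measurable.smul hg).aestronglyMeasurable
  · filter_upwards with z
    rw [norm_smul, Real.norm_eq_abs, abs_of_nonneg (heatKer_nonneg' 3 hh z)]
    calc heatKer 3 h z * ‖g z‖ ≤ heatKer 3 h z * 1 :=
          mul_le_mul_of_nonneg_left (hbd z) (heatKer_nonneg' 3 hh z)
      _ = heatKer 3 h z := mul_one _

lemma stronglyMeasurable_heatConv' {h : ℝ} {f : Euc 3 → Euc 2} (hf : Measurable f) :
    StronglyMeasurable (fun x : Euc 3 => ∫ z : Euc 3, heatKer 3 h z • f (x - z)) := by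
  have key : StronglyMeasurable
      (Function.uncurry fun x z : Euc 3 => heatKer 3 h z • f (x - z)) := by
    apply Measurable.stronglyMeasurable
    exact ((continuous_heatKer' 3 h).measurable.comp measurable_snd).smul
      (hf.comp (measurable_fst.sub measurable_snd))
  exact key.integral_prod_right

lemma heatKer_subst' {h : ℝ} (hh : 0 < h) (z : Euc 3) :
    heatKer 3 h (Real.sqrt h • z) = h ^ (-(3:ℝ)/2) * heatKer 3 1 z := by
  unfold heatKer
  rw [show (-(3:ℕ):ℝ)/2 = -(3:ℝ)/2 by norm_num]
  have h1 : ‖Real.sqrt h • z‖ ^ 2 = h * ‖z‖ ^ 2 := by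
    rw [norm_smul, Real.norm_eq_abs, abs_of_nonneg (Real.sqrt_nonneg h), mul_pow,
      Real.sq_sqrt hh.le]
  rw [h1]
  have h2 : (4 * π * h : ℝ) ^ (-(3:ℝ)/2) = (4 * π * 1) ^ (-(3:ℝ)/2) * h ^ (-(3:ℝ)/2) := by
    rw [mul_one, ← Real.mul_rpow (by positivity) hh.le]
  have h3 : -(h * ‖z‖ ^ 2) / (4 * h) = -‖z‖ ^ 2 / (4 * 1) := by
    field_simp
  rw [h2, h3]
  ring

lemma subst_sub' {h : ℝ} (hh : 0 < h) {f : Euc 3 → Euc 2} (x : Euc 3) :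
    ∫ z : Euc 3, heatKer 3 1 z • f (x - Real.sqrt h • z)
      = ∫ z : Euc 3, heatKer 3 h z • f (x - z) := by
  set g : Euc 3 → Euc 2 := fun z => heatKer 3 h z • f (x - z) with hg
  have key : ∀ z : Euc 3, heatKer 3 1 z • f (x - Real.sqrt h • z)
      = (h ^ ((3:ℝ)/2)) • g (Real.sqrt h • z) := by
    intro z
    rw [hg]; dsimp only
    rw [heatKer_subst' hh, smul_smul, ← mul_assoc, ← Real.rpow_add hh]
    norm_num
  simp_rw [key]
  rw [integral_smul,
    MeasureTheory.Measure.integral_comp_smul_of_nonneg volume g (Real.sqrt h)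
      (hR := Real.sqrt_nonneg h),
    finrank_euclideanSpace_fin, smul_smul]
  have h1 : Real.sqrt h ^ 3 = h ^ ((3:ℝ)/2) := by
    rw [Real.sqrt_eq_rpow, ← Real.rpow_natCast (h ^ ((1:ℝ)/2)) 3, ← Real.rpow_mul hh.le]
    norm_num
  rw [h1, mul_inv_cancel₀ (by positivity), one_smul]

lemma subst_add' {h : ℝ} (hh : 0 < h) {f : Euc 3 → Euc 2} (x : Euc 3) :
    ∫ z : Euc 3, heatKer 3 1 z • f (x + Real.sqrt h • z)
      = ∫ z : Euc 3, heatKer 3 h z • f (x - z) := by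
  rw [← subst_sub' hh x,
    ← integral_neg_eq_self (fun z : Euc 3 => heatKer 3 1 z • f (x + Real.sqrt h • z)) volume]
  congr 1; funext z
  simp [heatKer, smul_neg, ← sub_eq_add_neg]

/-- Classical (strong) form of the outer Euler–Lagrange equation: the projection
of G_h∗((uⁿ−uⁿ⁻¹)/h) − Δ_h uⁿ onto the orthogonal complement of uⁿ vanishes a.e. -/
theorem euler_lagrange_outer_strong_form
    (h : ℝ) (hh : 0 < h) (uprev : Euc 3 → Euc 2)
    (humeas : Measurable uprev) (huper : ZPeriodic uprev) (huunit : ∀ x, ‖uprev x‖ = 1) :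
    ∀ᵐ x ∂(volume : Measure (Euc 3)),
      (heatConv h (fun y => h⁻¹ • (threshStep h uprev y - uprev y)) x
          - approxLap h (threshStep h uprev) x)
        - ⟪threshStep h uprev x,
            heatConv h (fun y => h⁻¹ • (threshStep h uprev y - uprev y)) x
              - approxLap h (threshStep h uprev) x⟫ • threshStep h uprev x = 0 := by
  set un := threshStep h uprev with hun
  have hv_meas : Measurable (fun x : Euc 3 => heatConv h uprev x) := by
    have := (stronglyMeasurable_heatConv' (h := h) humeas).measurable
    exact this
  have hun_meas : Measurable un := by
    rw [hun]; unfold threshStep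
    exact (hv_meas.norm.inv).smul hv_meas
  have hun_bd : ∀ x, ‖un x‖ ≤ 1 := by
    intro x
    rw [hun]; unfold threshStep
    rw [norm_smul, norm_inv, norm_norm]
    rcases eq_or_ne (‖heatConv h uprev x‖) 0 with h0 | h0
    · simp [h0]
    · rw [inv_mul_cancel₀ h0]
  have huprev_bd : ∀ x, ‖uprev x‖ ≤ 1 := fun x => (huunit x).le
  refine Filter.Eventually.of_forall fun x => ?_
  set v : Euc 2 := heatConv h uprev x with hv
  set w : Euc 2 := ∫ z : Euc 3, heatKer 3 h z • un (x - z) with hw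
  have I_un : Integrable (fun z : Euc 3 => heatKer 3 h z • un (x - z)) :=
    integrable_heatKer_smul' hh (hun_meas.comp (measurable_const.sub measurable_id))
      (fun z => hun_bd _)
  have I_uprev : Integrable (fun z : Euc 3 => heatKer 3 h z • uprev (x - z)) :=
    integrable_heatKer_smul' hh (humeas.comp (measurable_const.sub measurable_id))
      (fun z => huprev_bd _)
  have I_add : Integrable (fun z : Euc 3 => heatKer 3 1 z • un (x + Real.sqrt h • z)) :=
    integrable_heatKer_smul' one_pos
      (hun_meas.comp (measurable_const.add (measurable_const_smul (Real.sqrt h))))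
      (fun z => hun_bd _)
  have I_sub : Integrable (fun z : Euc 3 => heatKer 3 1 z • un (x - Real.sqrt h • z)) :=
    integrable_heatKer_smul' one_pos
      (hun_meas.comp (measurable_const.sub (measurable_const_smul (Real.sqrt h))))
      (fun z => hun_bd _)
  have I_const : Integrable (fun z : Euc 3 => heatKer 3 1 z • ((2:ℝ) • un x)) :=
    (integrable_heatKer' one_pos).smul_const _
  -- Step A: the convolution term
  have stepA : heatConv h (fun y => h⁻¹ • (un y - uprev y)) x = h⁻¹ • (w - v) := by
    unfold heatConv
    have e : ∀ z : Euc 3, heatKer 3 h z • (h⁻¹ • (un (x - z) - uprev (x - z)))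
        = h⁻¹ • (heatKer 3 h z • un (x - z) - heatKer 3 h z • uprev (x - z)) := by
      intro z; rw [smul_comm, smul_sub]
    simp_rw [e]
    rw [integral_smul, integral_sub I_un I_uprev]
    rw [hw, hv]
    rfl
  -- Step B: the approximate Laplacian
  have stepB : approxLap h un x = (2 * h)⁻¹ • (w - (2:ℝ) • un x + w) := by
    unfold approxLap
    have e : ∀ z : Euc 3, heatKer 3 1 z •
          ((2 * h)⁻¹ • (un (x + Real.sqrt h • z) - (2:ℝ) • un x + un (x - Real.sqrt h • z)))
        = (2 * h)⁻¹ • (heatKer 3 1 z • un (x + Real.sqrt h • z)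
            - heatKer 3 1 z • ((2:ℝ) • un x) + heatKer 3 1 z • un (x - Real.sqrt h • z)) := by
      intro z; rw [smul_comm, smul_add, smul_sub]
    simp_rw [e]
    have I_addsub : Integrable (fun z : Euc 3 => heatKer 3 1 z • un (x + Real.sqrt h • z)
        - heatKer 3 1 z • ((2:ℝ) • un x)) := I_add.sub I_const
    rw [integral_smul, integral_add I_addsub I_sub, integral_sub I_add I_const,
      subst_add' hh x, subst_sub' hh x, integral_smul_const, integral_heatKer' one_pos, one_smul,
      ← hw]
  rw [stepA, stepB]
  have hA : h⁻¹ • (w - v) - (2 * h)⁻¹ • (w - (2:ℝ) • un x + w) = h⁻¹ • (un x - v) := by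
    have hne : h ≠ 0 := hh.ne'
    match_scalars <;> field_simp <;> ring
  rw [hA]
  have hunx : un x = ‖v‖⁻¹ • v := by rw [hun, hv]; rfl
  rcases eq_or_ne v 0 with h0 | h0
  · rw [hunx, h0]
    simp
  · have hnv : ‖v‖ ≠ 0 := norm_ne_zero_iff.mpr h0
    have hdiff : un x - v = (‖v‖⁻¹ - 1) • v := by
      rw [hunx, sub_smul, one_smul]
    rw [hdiff, smul_smul]
    set c : ℝ := h⁻¹ * (‖v‖⁻¹ - 1) with hc
    rw [hunx, real_inner_smul_left, real_inner_smul_right, real_inner_self_eq_norm_sq,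
      smul_smul]
    have hs : ‖v‖⁻¹ * (c * ‖v‖ ^ 2) * ‖v‖⁻¹ = c := by
      rw [pow_two]
      calc ‖v‖⁻¹ * (c * (‖v‖ * ‖v‖)) * ‖v‖⁻¹
          = c * ((‖v‖⁻¹ * ‖v‖) * (‖v‖ * ‖v‖⁻¹)) := by ring
        _ = c := by rw [inv_mul_cancel₀ hnv, mul_inv_cancel₀ hnv, one_mul, mul_one]
    rw [hs, sub_self]
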